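/- Let n ≥ 2 be an integer, x_k = cos(kπ/n) for 1 ≤ k ≤ n−1, f₁(x) = T_n(x) + 2 − ((x+2)/n²)·T_n′(x) and f₃(x) = (1/n²)·(1−x)·(n² − T_n′(x)). Then f₁′(x_k) = (−1)^k·(x_k+2)/(1−x_k²) and f₃′(x_k) = (−1)^k/(1+x_k) − 1, and with 𝓛_k(f;x) := (1 − x_k·x)·f(x_k) + (1 − x_k²)·(x − x_k)·f′(x_k): 𝓛_k(f₁;x) = (1−x_k)·(3+2x+x_k) if k is even and 𝓛_k(f₁;x) = (1+x_k)·(1+x_k−2x) if k is odd; 𝓛_k(f₃;x) = (1−x_k)·(1+x_k²−2x_k·x) if k is even and 𝓛_k(f₃;x) = (1−x_k²)·(1+x_k−2x) if k is odd. -/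

import Mathlib

/-! At `x_k` the polynomial `T_n` has a local extremum, so `T_n'(x_k) = 0` and `T_n(x_k) = (-1)^k`.
The Chebyshev equation `(1 - x²) T_n'' = x T_n' - n² T_n` then gives
`T_n''(x_k) = -n² (-1)^k / (1 - x_k²)`, and these three values are all that `f₁`, `f₃` and their
derivatives see at `x_k`. -/

open Polynomial Real

/-- The `n`-th Chebyshev polynomial of the first kind, as a real polynomial. -/
noncomputable def chebT (n : ℕ) : Polynomial ℝ := Polynomial.Chebyshev.T ℝ (n : ℤ)

/-- `f₁(x) = T_n(x) + 2 - ((x+2)/n²) T_n'(x)`. -/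
noncomputable def f₁ (n : ℕ) (x : ℝ) : ℝ :=
  (chebT n).eval x + 2 - (x + 2) / (n : ℝ) ^ 2 * (derivative (chebT n)).eval x

/-- `f₃(x) = (1/n²)(1-x)(n² - T_n'(x))`. -/
noncomputable def f₃ (n : ℕ) (x : ℝ) : ℝ :=
  1 / (n : ℝ) ^ 2 * (1 - x) * ((n : ℝ) ^ 2 - (derivative (chebT n)).eval x)

/-- `𝓛(c, f; x) = (1 - c x) f(c) + (1 - c²)(x - c) f'(c)`. -/
noncomputable def Lfun (c : ℝ) (f : ℝ → ℝ) (x : ℝ) : ℝ :=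
  (1 - c * x) * f c + (1 - c ^ 2) * (x - c) * deriv f c

section Nodes

variable {n k : ℕ}

theorem chebT_eval_cos_mul_pi_div (hn : n ≠ 0) :
    (chebT n).eval (cos (k * π / n)) = (-1) ^ k := by
  rw [chebT, Chebyshev.eval_T_real_cos_int_mul_pi_div hn, Int.cast_negOnePow_natCast]

theorem derivative_chebT_eval_cos_mul_pi_div (hk₀ : 0 < k) (hk : k < n) :
    (derivative (chebT n)).eval (cos (k * π / n)) = 0 :=
  (Chebyshev.isLocalExtr_T_real (by omega) hk₀ hk).hasDerivAt_eq_zero ((chebT n).hasDerivAt _)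

theorem cos_mul_pi_div_sq_lt_one (hk₀ : 0 < k) (hk : k < n) : cos (k * π / n) ^ 2 < 1 := by
  have hn : (0 : ℝ) < n := by exact_mod_cast (by omega : 0 < n)
  have hsin : 0 < sin (k * π / n) := by
    apply sin_pos_of_pos_of_lt_pi (by positivity)
    rw [div_lt_iff₀ hn]
    have hkn : (k : ℝ) < n := by exact_mod_cast hk
    nlinarith [pi_pos]
  nlinarith [sin_sq_add_cos_sq (k * π / n)]

end Nodes

theorem hasDerivAt_f₁ (n : ℕ) (x : ℝ) :
    HasDerivAt (f₁ n) ((derivative (chebT n)).eval x - ((derivative (chebT n)).eval x +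
      (x + 2) * (derivative (derivative (chebT n))).eval x) / n ^ 2) x := by
  have hquot := ((hasDerivAt_id x).add_const 2).div_const ((n : ℝ) ^ 2)
  refine ((((chebT n).hasDerivAt x).add_const 2).sub
    (hquot.mul ((derivative (chebT n)).hasDerivAt x))).congr_deriv ?_
  simp only [id]
  ring

theorem hasDerivAt_f₃ (n : ℕ) (x : ℝ) :
    HasDerivAt (f₃ n) (-(n ^ 2 - (derivative (chebT n)).eval x) / n ^ 2 -
      (1 - x) * (derivative (derivative (chebT n))).eval x / n ^ 2) x := by
  have hlin := ((hasDerivAt_id x).const_sub 1).const_mul (1 / (n : ℝ) ^ 2)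
  refine (hlin.mul (((derivative (chebT n)).hasDerivAt x).const_sub _)).congr_deriv ?_
  simp only [id]
  ring

section CriticalPoint

variable {n : ℕ} {c : ℝ}

theorem one_sub_sq_mul_derivative_derivative_chebT_eval (hc : (derivative (chebT n)).eval c = 0) :
    (1 - c ^ 2) * (derivative (derivative (chebT n))).eval c = -n ^ 2 * (chebT n).eval c := by
  have h := congrArg (eval c)
    (Chebyshev.one_sub_X_sq_mul_derivative_derivative_T_eq_poly_in_T (R := ℝ) n)
  simp only [Function.iterate_succ, Function.iterate_zero, Function.comp_apply, id, eval_mul,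
    eval_sub, eval_one, eval_pow, eval_X] at h
  simp only [chebT] at hc ⊢
  rw [h, hc]
  simp

theorem deriv_f₁_of_derivative_chebT_eval_eq_zero (hn : n ≠ 0)
    (hc : (derivative (chebT n)).eval c = 0) (hc₁ : 1 - c ^ 2 ≠ 0) :
    deriv (f₁ n) c = (chebT n).eval c * (c + 2) / (1 - c ^ 2) := by
  have hn' : (n : ℝ) ≠ 0 := by exact_mod_cast hn
  have hode := one_sub_sq_mul_derivative_derivative_chebT_eval hc
  rw [(hasDerivAt_f₁ n c).deriv, hc, eq_div_iff hc₁]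
  field_simp
  linear_combination (-(c + 2)) * hode

theorem deriv_f₃_of_derivative_chebT_eval_eq_zero (hn : n ≠ 0)
    (hc : (derivative (chebT n)).eval c = 0) (hc₁ : 1 - c ^ 2 ≠ 0) :
    deriv (f₃ n) c = (chebT n).eval c / (1 + c) - 1 := by
  have hn' : (n : ℝ) ≠ 0 := by exact_mod_cast hn
  have hc₂ : 1 + c ≠ 0 := fun h => hc₁ (by linear_combination (1 - c) * h)
  have hode := one_sub_sq_mul_derivative_derivative_chebT_eval hc
  rw [(hasDerivAt_f₃ n c).deriv, hc]
  field_simp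
  linear_combination -hode

theorem f₁_of_derivative_chebT_eval_eq_zero (hc : (derivative (chebT n)).eval c = 0) :
    f₁ n c = (chebT n).eval c + 2 := by
  simp [f₁, hc]

theorem f₃_of_derivative_chebT_eval_eq_zero (hn : n ≠ 0)
    (hc : (derivative (chebT n)).eval c = 0) : f₃ n c = 1 - c := by
  have hn' : (n : ℝ) ≠ 0 := by exact_mod_cast hn
  rw [f₃, hc, sub_zero]
  field_simp

theorem Lfun_f₁_of_derivative_chebT_eval_eq_zero (hn : n ≠ 0)
    (hc : (derivative (chebT n)).eval c = 0) (hc₁ : 1 - c ^ 2 ≠ 0) (x : ℝ) :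
    Lfun c (f₁ n) x =
      (1 - c * x) * ((chebT n).eval c + 2) + (x - c) * (c + 2) * (chebT n).eval c := by
  rw [Lfun, f₁_of_derivative_chebT_eval_eq_zero hc,
    deriv_f₁_of_derivative_chebT_eval_eq_zero hn hc hc₁]
  field_simp

theorem Lfun_f₃_of_derivative_chebT_eval_eq_zero (hn : n ≠ 0)
    (hc : (derivative (chebT n)).eval c = 0) (hc₁ : 1 - c ^ 2 ≠ 0) (x : ℝ) :
    Lfun c (f₃ n) x = (1 - c) * (1 - c * x + (x - c) * ((chebT n).eval c - 1 - c)) := by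
  have hc₂ : 1 + c ≠ 0 := fun h => hc₁ (by linear_combination (1 - c) * h)
  rw [Lfun, f₃_of_derivative_chebT_eval_eq_zero hn hc,
    deriv_f₃_of_derivative_chebT_eval_eq_zero hn hc hc₁]
  field_simp
  ring

end CriticalPoint

theorem L_of_f1_f3_general (n : ℕ) (k : ℕ) (hk1 : 1 ≤ k) (hk2 : k ≤ n - 1) :
    deriv (f₁ n) (Real.cos (k * π / n)) =
      (-1 : ℝ) ^ k * (Real.cos (k * π / n) + 2) / (1 - Real.cos (k * π / n) ^ 2) ∧
    deriv (f₃ n) (Real.cos (k * π / n)) =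
      (-1 : ℝ) ^ k / (1 + Real.cos (k * π / n)) - 1 ∧
    (∀ x : ℝ, Even k →
      Lfun (Real.cos (k * π / n)) (f₁ n) x =
        (1 - Real.cos (k * π / n)) * (3 + 2 * x + Real.cos (k * π / n)) ∧
      Lfun (Real.cos (k * π / n)) (f₃ n) x =
        (1 - Real.cos (k * π / n)) * (1 + Real.cos (k * π / n) ^ 2 - 2 * Real.cos (k * π / n) * x)) ∧
    (∀ x : ℝ, Odd k →
      Lfun (Real.cos (k * π / n)) (f₁ n) x =
        (1 + Real.cos (k * π / n)) * (1 + Real.cos (k * π / n) - 2 * x) ∧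
      Lfun (Real.cos (k * π / n)) (f₃ n) x =
        (1 - Real.cos (k * π / n) ^ 2) * (1 + Real.cos (k * π / n) - 2 * x)) := by
  have hkn : k < n := by omega
  have hn : n ≠ 0 := by omega
  have hc := derivative_chebT_eval_cos_mul_pi_div hk1 hkn
  have hc₁ := (sub_pos.2 (cos_mul_pi_div_sq_lt_one hk1 hkn)).ne'
  have hT := chebT_eval_cos_mul_pi_div (k := k) hn
  refine ⟨?_, ?_, fun x hk => ?_, fun x hk => ?_⟩
  · rw [deriv_f₁_of_derivative_chebT_eval_eq_zero hn hc hc₁, hT]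
  · rw [deriv_f₃_of_derivative_chebT_eval_eq_zero hn hc hc₁, hT]
  all_goals
    rw [Lfun_f₁_of_derivative_chebT_eval_eq_zero hn hc hc₁,
      Lfun_f₃_of_derivative_chebT_eval_eq_zero hn hc hc₁, hT, hk.neg_one_pow]
    constructor <;> ring

/-- Values of `f₁'`, `f₃'` and of `𝓛_k(f₁;·)`, `𝓛_k(f₃;·)` at the zeros
`x_k = cos(kπ/n)` of `T_n'`. -/
theorem L_of_f1_f3 (n : ℕ) (hn : 2 ≤ n) (k : ℕ) (hk1 : 1 ≤ k) (hk2 : k ≤ n - 1) :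
    deriv (f₁ n) (Real.cos (k * π / n)) =
      (-1 : ℝ) ^ k * (Real.cos (k * π / n) + 2) / (1 - Real.cos (k * π / n) ^ 2) ∧
    deriv (f₃ n) (Real.cos (k * π / n)) =
      (-1 : ℝ) ^ k / (1 + Real.cos (k * π / n)) - 1 ∧
    (∀ x : ℝ, Even k →
      Lfun (Real.cos (k * π / n)) (f₁ n) x =
        (1 - Real.cos (k * π / n)) * (3 + 2 * x + Real.cos (k * π / n)) ∧
      Lfun (Real.cos (k * π / n)) (f₃ n) x =
        (1 - Real.cos (k * π / n)) * (1 + Real.cos (k * π / n) ^ 2 - 2 * Real.cos (k * π / n) * x)) ∧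
    (∀ x : ℝ, Odd k →
      Lfun (Real.cos (k * π / n)) (f₁ n) x =
        (1 + Real.cos (k * π / n)) * (1 + Real.cos (k * π / n) - 2 * x) ∧
      Lfun (Real.cos (k * π / n)) (f₃ n) x =
        (1 - Real.cos (k * π / n) ^ 2) * (1 + Real.cos (k * π / n) - 2 * x)) :=
  L_of_f1_f3_general n k hk1 hk2
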